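/- arXiv:2206.00875 — 4 statements merged into one kernel-verified Lean document; each statement's English description precedes it below -/
import Mathlib

section
/- Let M be a von Neumann algebra and let a ∈ M be positive, bounded, and injective. If there is a sequence (f_n) of pairwise Murray–von Neumann equivalent nonzero projections in M with ‖f_n a f_n‖ → 0, then a is not invertible in M; more strongly, for every ε > 0 there exists n with f_n ≺ χ_{(0,ε]}(a), where χ denotes the spectral projection of a. -/
variable {H : Type*} [NormedAddCommGroup H] [InnerProductSpace ℂ H] [CompleteSpace H]

/-- `p` is an orthogonal projection belonging to the von Neumann algebra `M`. -/
def IsProjIn (M : VonNeumannAlgebra H) (p : H →L[ℂ] H) : Prop :=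
  p ∈ M ∧ IsSelfAdjoint p ∧ IsIdempotentElem p

/-- The order `p ≤ q` on projections: `p * q = p`. -/
def SubProj (p q : H →L[ℂ] H) : Prop := p * q = p

/-- Murray–von Neumann equivalence of projections in `M`. -/
def MvNEquiv (M : VonNeumannAlgebra H) (p q : H →L[ℂ] H) : Prop :=
  ∃ v ∈ M, star v * v = p ∧ v * star v = q

/-- Murray–von Neumann subequivalence `p ≺ q` in `M`. -/
def MvNSub (M : VonNeumannAlgebra H) (p q : H →L[ℂ] H) : Prop :=
  ∃ v ∈ M, star v * v = p ∧ SubProj (v * star v) q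

/-- `p` is a finite projection of `M`. -/
def FiniteProj (M : VonNeumannAlgebra H) (p : H →L[ℂ] H) : Prop :=
  IsProjIn M p ∧ ∀ q, IsProjIn M q → SubProj q p → MvNEquiv M q p → q = p

/-!
Fix `ε > 0`, let `q` be the spectral projection `χ_{[0,ε]}(a)` and pick `p = fₙ` with
`‖p a p‖ < ε`. As `a` commutes with `q` and `a ≥ ε` on the range of `1 - q`, we get
`ε (1 - q) ≤ a`; compressing by `p` and using the C⋆-identity gives
`ε ‖(1 - q) p‖² = ε ‖p (1 - q) p‖ ≤ ‖p a p‖ < ε`. Hence `d = p q p + (1 - p) = 1 - p (1 - q) p`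
is strictly positive and commutes with `p`, and `v = q p d^(-1/2)` satisfies `v⋆ v = p` and
`v v⋆ ≤ q`. If `a` had an inverse `b`, then `χ_{[0,ε]}(a) = 0` as soon as `ε ‖b‖ < 1`, which is
impossible since it dominates a copy of `fₙ ≠ 0`.
-/

namespace IsStarProjection

section Ring
variable {R : Type*} [Ring R] [StarRing R] {p q : R}

theorem star_one_sub_mul_mul_self (hp : IsStarProjection p) (hq : IsStarProjection q) :
    star ((1 - q) * p) * ((1 - q) * p) = p * (1 - q) * p := by
  rw [star_mul, hp.isSelfAdjoint.star_eq, hq.one_sub.isSelfAdjoint.star_eq, mul_assoc,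
    ← mul_assoc (1 - q), hq.one_sub.isIdempotentElem.eq, mul_assoc]

theorem one_sub_mul_mul_one_sub_le [PartialOrder R] [StarOrderedRing R] {a : R}
    (hq : IsStarProjection q) (ha : 0 ≤ a) (hcomm : Commute a q) :
    (1 - q) * a * (1 - q) ≤ a := by
  have hcompl : (1 - q) * a * (1 - q) = a * (1 - q) := by
    rw [((Commute.one_right a).sub_right hcomm).symm.eq, mul_assoc,
      hq.one_sub.isIdempotentElem.eq]
  have hcorner : star q * a * q = a * q := by
    rw [hq.isSelfAdjoint.star_eq, hcomm.symm.eq, mul_assoc, hq.isIdempotentElem.eq]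
  rw [← sub_nonneg, hcompl, mul_one_sub, sub_sub_cancel, ← hcorner]
  exact star_left_conjugate_nonneg ha q

end Ring

section CStarAlgebra
variable {A : Type*} [CStarAlgebra A] {p q : A}

theorem norm_one_sub_mul_sq (hp : IsStarProjection p) (hq : IsStarProjection q) :
    ‖(1 - q) * p‖ ^ 2 = ‖p * (1 - q) * p‖ := by
  rw [← star_one_sub_mul_mul_self hp hq, CStarRing.norm_star_mul_self, sq]

variable [PartialOrder A] [StarOrderedRing A]

theorem mul_norm_one_sub_mul_sq_le (hp : IsStarProjection p) (hq : IsStarProjection q)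
    {a : A} {ε : ℝ} (hε : 0 ≤ ε) (h : ε • (1 - q) ≤ a) :
    ε * ‖(1 - q) * p‖ ^ 2 ≤ ‖p * a * p‖ := by
  have hle : ε • (p * (1 - q) * p) ≤ p * a * p := by
    simpa only [mul_smul_comm, smul_mul_assoc] using hp.isSelfAdjoint.conjugate_le_conjugate h
  have hnonneg : 0 ≤ ε • (p * (1 - q) * p) :=
    smul_nonneg hε (hp.isSelfAdjoint.conjugate_nonneg hq.one_sub.nonneg)
  have := CStarAlgebra.norm_le_norm_of_nonneg_of_le hnonneg hle
  rwa [norm_smul, Real.norm_of_nonneg hε, ← norm_one_sub_mul_sq hp hq] at this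

theorem isStrictlyPositive_of_norm_one_sub_mul_lt_one (hp : IsStarProjection p)
    (hq : IsStarProjection q) (h : ‖(1 - q) * p‖ < 1) :
    IsStrictlyPositive (p * q * p + (1 - p)) := by
  have hd : p * q * p + (1 - p) = 1 - p * (1 - q) * p := by
    rw [mul_one_sub, sub_mul, hp.isIdempotentElem.eq]
    abel
  have ht : ‖p * (1 - q) * p‖ < 1 := by
    rw [← norm_one_sub_mul_sq hp hq]
    exact pow_lt_one₀ (norm_nonneg _) h two_ne_zero
  have hle : algebraMap ℝ A (1 - ‖p * (1 - q) * p‖) ≤ 1 - p * (1 - q) * p := by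
    rw [map_sub, map_one]
    exact sub_le_sub_left
      (hq.one_sub.isSelfAdjoint.conjugate_self hp.isSelfAdjoint).le_algebraMap_norm_self 1
  rw [hd]
  exact (isStrictlyPositive_algebraMap (sub_pos.mpr ht)).of_le hle

open CFC in
theorem star_mul_self_mul_rpow_neg_half (hp : IsStarProjection p) (hq : IsStarProjection q)
    (hd : IsStrictlyPositive (p * q * p + (1 - p))) :
    star (q * p * (p * q * p + (1 - p)) ^ (-(1 / 2) : ℝ)) *
      (q * p * (p * q * p + (1 - p)) ^ (-(1 / 2) : ℝ)) = p := by
  set d := p * q * p + (1 - p)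
  set s := d ^ (-(1 / 2) : ℝ)
  have hdp : d * p = p * q * p := by
    simp only [d, add_mul, one_sub_mul, mul_assoc, hp.isIdempotentElem.eq, sub_self, add_zero]
  have hpd : p * d = p * q * p := by
    simp only [d, mul_add, mul_one_sub, ← mul_assoc, hp.isIdempotentElem.eq, sub_self, add_zero]
  have hsp : Commute s p := Commute.cfc_nnreal (hdp.trans hpd.symm) _
  have hs : star s = s := (rpow_nonneg : 0 ≤ s).isSelfAdjoint.star_eq
  calc star (q * p * s) * (q * p * s) = s * (p * q * p) * s := by
        rw [star_mul, star_mul, hs, hp.isSelfAdjoint.star_eq, hq.isSelfAdjoint.star_eq]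
        simp only [mul_assoc, ← mul_assoc q q, hq.isIdempotentElem.eq]
    _ = s * d * s * p := by
        rw [← hdp, ← mul_assoc s d p, mul_assoc (s * d) p s, ← hsp.eq, ← mul_assoc]
    _ = p := by rw [conjugate_rpow_neg_one_half d hd, one_mul]

end CStarAlgebra

open ContinuousLinearMap in
theorem smul_one_sub_le_of_forall_ker {a q : H →L[ℂ] H} (hq : IsStarProjection q)
    (ha : IsSelfAdjoint a) {ε : ℝ} (h : ∀ x, q x = 0 → ε * ‖x‖ ^ 2 ≤ (inner ℂ x (a x)).re) :
    ε • (1 - q) ≤ (1 - q) * a * (1 - q) := by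
  have hr := hq.one_sub
  rw [le_def, isPositive_def']
  refine ⟨(ha.conjugate_self hr.isSelfAdjoint).sub ((IsSelfAdjoint.all ε).smul hr.isSelfAdjoint),
    fun x => ?_⟩
  set y := (1 - q) x
  have hqy : q y = 0 := congr($(hq.mul_one_sub_self) x)
  have hry : (1 - q) y = y := congr($(hr.isIdempotentElem.eq) x)
  have hsymm : ∀ u v, inner ℂ ((1 - q) u) v = inner ℂ u ((1 - q) v) :=
    isSelfAdjoint_iff_isSymmetric.mp hr.isSelfAdjoint
  have h1 : inner ℂ ((1 - q) (a y)) x = inner ℂ (a y) y := hsymm _ _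
  have h2 : inner ℂ y x = inner ℂ y y :=
    calc inner ℂ y x = inner ℂ ((1 - q) y) x := by rw [hry]
      _ = inner ℂ y y := hsymm y x
  have h3 : inner ℂ (a y) y = inner ℂ y (a y) := isSelfAdjoint_iff_isSymmetric.mp ha y y
  have hT : ((1 - q) * a * (1 - q) - ε • (1 - q)) x = (1 - q) (a y) - ε • y := rfl
  rw [reApplyInnerSelf_apply, hT, inner_sub_left, h1, RCLike.real_smul_eq_coe_smul (K := ℂ),
    inner_smul_real_left, h2, h3]
  have := h y hqy
  simp only [map_sub, RCLike.smul_re, inner_self_eq_norm_sq, RCLike.re_to_complex]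
  linarith

end IsStarProjection

theorem eq_zero_of_forall_norm_apply_le {𝕜 E : Type*} [NontriviallyNormedField 𝕜]
    [NormedAddCommGroup E] [NormedSpace 𝕜 E] {a b q : E →L[𝕜] E} (hba : b * a = 1)
    (hq : IsIdempotentElem q) {ε : ℝ} (hε : ε * ‖b‖ < 1)
    (h : ∀ x, q x = x → ‖a x‖ ≤ ε * ‖x‖) : q = 0 := by
  ext y
  set x := q y
  have hx : ‖x‖ ≤ ‖b‖ * (ε * ‖x‖) :=
    calc ‖x‖ = ‖b (a x)‖ := by rw [show b (a x) = x from congr($hba x)]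
      _ ≤ ‖b‖ * ‖a x‖ := b.le_opNorm _
      _ ≤ ‖b‖ * (ε * ‖x‖) := by gcongr; exact h x congr($(hq.eq) y)
  have : ‖x‖ ≤ 0 := by nlinarith [norm_nonneg x]
  simpa [x] using this

theorem VonNeumannAlgebra.cfc_nnreal_mem (M : VonNeumannAlgebra H) {a : H →L[ℂ] H} (ha : a ∈ M)
    (f : NNReal → NNReal) : cfc f a ∈ M := by
  rw [← SetLike.mem_coe, ← M.centralizer_centralizer, Set.mem_centralizer_iff]
  intro c hc
  exact (Commute.cfc_nnreal (Set.mem_centralizer_iff.mp hc a ha) f).symm.eq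

theorem IsProjIn.isStarProjection {M : VonNeumannAlgebra H} {p : H →L[ℂ] H}
    (hp : IsProjIn M p) : IsStarProjection p :=
  ⟨hp.2.2, hp.2.1⟩

theorem mvnSub_of_norm_one_sub_mul_lt_one {M : VonNeumannAlgebra H} {p q : H →L[ℂ] H}
    (hp : IsProjIn M p) (hq : IsProjIn M q) (h : ‖(1 - q) * p‖ < 1) : MvNSub M p q := by
  have hdM : p * q * p + (1 - p) ∈ M :=
    add_mem (mul_mem (mul_mem hp.1 hq.1) hp.1) (sub_mem (one_mem M) hp.1)
  have hd := hp.isStarProjection.isStrictlyPositive_of_norm_one_sub_mul_lt_one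
    hq.isStarProjection h
  refine ⟨q * p * (p * q * p + (1 - p)) ^ (-(1 / 2) : ℝ),
    mul_mem (mul_mem hq.1 hp.1) (M.cfc_nnreal_mem hdM _),
    hp.isStarProjection.star_mul_self_mul_rpow_neg_half hq.isStarProjection hd, ?_⟩
  rw [SubProj, star_mul, star_mul, hq.isStarProjection.isSelfAdjoint.star_eq]
  simp only [mul_assoc, hq.isStarProjection.isIdempotentElem.eq]

theorem eq_zero_of_mvnSub_zero {M : VonNeumannAlgebra H} {p : H →L[ℂ] H} (h : MvNSub M p 0) :
    p = 0 := by
  obtain ⟨v, -, rfl, hv⟩ := h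
  rw [SubProj, mul_zero, eq_comm, CStarRing.mul_star_self_eq_zero_iff] at hv
  rw [hv, mul_zero]

/-- `e ε` stands for the spectral projection `χ_{[0,ε]}(a)`, specified through the properties
in `he`. -/
theorem stmt5_general (M : VonNeumannAlgebra H) (a : H →L[ℂ] H)
    (hapos : a.IsPositive)
    (f : ℕ → (H →L[ℂ] H)) (hf : ∀ n, IsProjIn M (f n)) (hfne : ∀ n, f n ≠ 0)
    (hlim : Filter.Tendsto (fun n => ‖f n * a * f n‖) Filter.atTop (nhds 0))
    (e : ℝ → (H →L[ℂ] H))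
    (he : ∀ ε : ℝ, 0 < ε → IsProjIn M (e ε) ∧ Commute a (e ε) ∧
      (∀ x : H, (e ε) x = x → ‖a x‖ ≤ ε * ‖x‖) ∧
      (∀ x : H, (e ε) x = 0 → ε * ‖x‖ ^ 2 ≤ ((inner ℂ x (a x) : ℂ)).re)) :
    (¬ ∃ b ∈ M, a * b = 1 ∧ b * a = 1) ∧
      ∀ ε : ℝ, 0 < ε → ∃ n, MvNSub M (f n) (e ε) := by
  have hsub : ∀ ε : ℝ, 0 < ε → ∃ n, MvNSub M (f n) (e ε) := by
    intro ε hε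
    obtain ⟨hq, hcomm, -, hker⟩ := he ε hε
    obtain ⟨n, hn⟩ := (hlim.eventually (gt_mem_nhds hε)).exists
    refine ⟨n, mvnSub_of_norm_one_sub_mul_lt_one (hf n) hq ?_⟩
    have hle : ε • (1 - e ε) ≤ a :=
      (hq.isStarProjection.smul_one_sub_le_of_forall_ker hapos.isSelfAdjoint hker).trans
        (hq.isStarProjection.one_sub_mul_mul_one_sub_le (a.nonneg_iff_isPositive.mpr hapos) hcomm)
    have := (hf n).isStarProjection.mul_norm_one_sub_mul_sq_le hq.isStarProjection hε.le hle
    have hsq : ‖(1 - e ε) * f n‖ ^ 2 < 1 := by nlinarith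
    exact (sq_lt_one_iff₀ (norm_nonneg _)).mp hsq
  refine ⟨?_, hsub⟩
  rintro ⟨b, -, -, hba⟩
  have hε : 0 < (‖b‖ + 1)⁻¹ := by positivity
  obtain ⟨n, hn⟩ := hsub _ hε
  obtain ⟨hq, -, hsmall, -⟩ := he _ hε
  have hq0 : e (‖b‖ + 1)⁻¹ = 0 := by
    refine eq_zero_of_forall_norm_apply_le hba hq.isStarProjection.isIdempotentElem ?_ hsmall
    rw [inv_mul_lt_one₀ (by positivity)]
    linarith
  exact hfne n (eq_zero_of_mvnSub_zero (hq0 ▸ hn))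

/-- If a ∈ M is positive, bounded and injective and (fₙ) is a sequence of pairwise
equivalent nonzero projections of M with ‖fₙ a fₙ‖ → 0, then a is not invertible in M;
more strongly, for every ε > 0 there is n with fₙ ≺ χ_{(0,ε]}(a).  Here the spectral
projection e ε = χ_{(0,ε]}(a) (= χ_{[0,ε]}(a) by injectivity) is characterized as a
projection in M commuting with a, with ‖ax‖ ≤ ε‖x‖ on its range and ⟪x, ax⟫ ≥ ε‖x‖²
on the range of its complement. -/
theorem stmt5 (M : VonNeumannAlgebra H) (a : H →L[ℂ] H) (ha : a ∈ M)
    (hapos : a.IsPositive) (hainj : Function.Injective a)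
    (f : ℕ → (H →L[ℂ] H)) (hf : ∀ n, IsProjIn M (f n)) (hfne : ∀ n, f n ≠ 0)
    (hfeq : ∀ m n, MvNEquiv M (f m) (f n))
    (hlim : Filter.Tendsto (fun n => ‖f n * a * f n‖) Filter.atTop (nhds 0))
    (e : ℝ → (H →L[ℂ] H))
    (he : ∀ ε : ℝ, 0 < ε → IsProjIn M (e ε) ∧ Commute a (e ε) ∧
      (∀ x : H, (e ε) x = x → ‖a x‖ ≤ ε * ‖x‖) ∧
      (∀ x : H, (e ε) x = 0 → ε * ‖x‖ ^ 2 ≤ ((inner ℂ x (a x) : ℂ)).re)) :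
    (¬ ∃ b ∈ M, a * b = 1 ∧ b * a = 1) ∧
      ∀ ε : ℝ, 0 < ε → ∃ n, MvNSub M (f n) (e ε) :=
  stmt5_general M a hapos f hf hfne hlim e he
end

section
/- Let N be a von Neumann algebra, let ψ: N → N be a map of the form ψ(a) = y a y⁻¹ for an invertible y ∈ N with polar decomposition y = u|y|, u unitary. If ψ maps every partial isometry of N to a partial isometry, then |y| lies in the center of N. -/
variable {H : Type*} [NormedAddCommGroup H] [InnerProductSpace ℂ H] [CompleteSpace H]

/-! Conjugating a unitary `w ∈ N` by `y` gives an invertible partial isometry, hence a unitary;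
unwinding `(y w y⁻¹)* (y w y⁻¹) = 1` gives `w* (y* y) w = y* y`. Since the unitaries of the
C⋆-algebra `N` span it, `|y|² = y* y` commutes with all of `N`, and so does its positive square
root `|y|`. -/

section StarMonoid

variable {R : Type*} [Monoid R] [StarMul R]

lemma Unitary.mem_of_isUnit_of_mul_star_mul_self {z : R} (hz : IsUnit z)
    (h : z * star z * z = z) : z ∈ unitary R := by
  refine Unitary.mem_iff.2 ⟨hz.mul_right_injective ?_, hz.mul_left_injective ?_⟩
  · simpa only [← mul_assoc, mul_one] using h
  · simpa only [one_mul] using h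

lemma Units.commute_star_mul_self_of_conj_mem_unitary (y : Rˣ) {w : R} (hw : w ∈ unitary R)
    (h : (y : R) * w * ↑y⁻¹ ∈ unitary R) : Commute (star (y : R) * y) w := by
  have hconj : star w * (star (y : R) * y) * w = star (y : R) * y := by
    calc star w * (star (y : R) * y) * w
        = star (y : R) * star ↑y⁻¹ * (star w * (star (y : R) * y) * w) * (↑y⁻¹ * y) := by
          rw [← star_mul, Units.inv_mul, star_one, one_mul, mul_one]
      _ = star (y : R) * (star ((y : R) * w * ↑y⁻¹) * ((y : R) * w * ↑y⁻¹)) * y := by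
          simp only [star_mul, mul_assoc]
      _ = star (y : R) * y := by rw [Unitary.star_mul_self_of_mem h, mul_one]
  calc star (y : R) * y * w = w * (star w * (star (y : R) * y) * w) := by
        rw [← mul_assoc, ← mul_assoc, Unitary.mul_star_self_of_mem hw, one_mul]
    _ = w * (star (y : R) * y) := by rw [hconj]

end StarMonoid

lemma StarSubalgebra.commute_of_forall_unitary {A : Type*} [CStarAlgebra A]
    (S : StarSubalgebra ℂ A) (hS : IsClosed (S : Set A)) {x : A}
    (hx : ∀ w ∈ unitary A, w ∈ S → Commute x w) {a : A} (ha : a ∈ S) : Commute x a := by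
  have := hS -- makes `S` a C⋆-algebra
  suffices h : ∀ b ∈ Submodule.span ℂ (unitary S : Set S), Commute x (b : A) from
    h ⟨a, ha⟩ (by simp [CStarAlgebra.span_unitary])
  intro b hb
  induction hb using Submodule.span_induction with
  | mem u hu =>
    refine hx u (Unitary.mem_iff.2 ⟨?_, ?_⟩) u.2
    · exact congrArg Subtype.val (Unitary.star_mul_self_of_mem hu)
    · exact congrArg Subtype.val (Unitary.mul_star_self_of_mem hu)
  | zero => exact Commute.zero_right x
  | add u v _ _ hu hv => exact hu.add_right hv
  | smul c u _ hu => exact hu.smul_right c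

lemma VonNeumannAlgebra.isClosed (N : VonNeumannAlgebra H) :
    IsClosed (N : Set (H →L[ℂ] H)) := by
  rw [← N.centralizer_centralizer]
  exact Set.isClosed_centralizer _

lemma Commute.of_mul_self_left_of_nonneg {A : Type*} [NonUnitalCStarAlgebra A] [PartialOrder A]
    [StarOrderedRing A] {m a : A} (hm : 0 ≤ m) (h : Commute (m * m) a) : Commute m a :=
  CFC.sqrt_mul_self m ▸ h.cfcₙ_nnreal NNReal.sqrt

theorem stmt8_general (N : VonNeumannAlgebra H) (y y' m : H →L[ℂ] H)
    (hinv₁ : y * y' = 1) (hinv₂ : y' * y = 1)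
    (hmpos : m.IsPositive) (hmsq : m * m = star y * y)
    (hpi : ∀ v ∈ N, v * star v * v = v →
      (y * v * y') * star (y * v * y') * (y * v * y') = y * v * y') :
    ∀ a ∈ N, m * a = a * m := by
  let Y : (H →L[ℂ] H)ˣ := ⟨y, y', hinv₁, hinv₂⟩
  have hunitary : ∀ w ∈ unitary (H →L[ℂ] H), w ∈ N → Commute (m * m) w := by
    intro w hw hwN
    rw [hmsq]
    refine Y.commute_star_mul_self_of_conj_mem_unitary hw
      (Unitary.mem_of_isUnit_of_mul_star_mul_self ?_ ?_)
    · exact (Y * Unitary.toUnits ⟨w, hw⟩ * Y⁻¹).isUnit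
    · exact hpi w hwN (by rw [Unitary.mul_star_self_of_mem hw, one_mul])
  intro a ha
  have hm : 0 ≤ m := (ContinuousLinearMap.nonneg_iff_isPositive m).2 hmpos
  exact (Commute.of_mul_self_left_of_nonneg hm
    (N.toStarSubalgebra.commute_of_forall_unitary N.isClosed hunitary ha)).eq

/-- If y ∈ N is invertible with polar decomposition y = u|y| (u unitary, |y| ≥ 0,
|y|² = y*y) and conjugation by y maps every partial isometry of N to a partial
isometry, then |y| is central in N. -/
theorem stmt8 (N : VonNeumannAlgebra H) (y y' m u : H →L[ℂ] H)
    (hy : y ∈ N) (hy' : y' ∈ N) (hm : m ∈ N) (hu : u ∈ N)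
    (hinv₁ : y * y' = 1) (hinv₂ : y' * y = 1)
    (hmpos : m.IsPositive) (hmsq : m * m = star y * y)
    (huni₁ : star u * u = 1) (huni₂ : u * star u = 1)
    (hpolar : y = u * m)
    (hpi : ∀ v ∈ N, v * star v * v = v →
      (y * v * y') * star (y * v * y') * (y * v * y') = y * v * y') :
    ∀ a ∈ N, m * a = a * m :=
  stmt8_general N y y' m hinv₁ hinv₂ hmpos hmsq hpi
end

section
/- Let N be a von Neumann algebra, ψ₁, ψ₂: N → N *-automorphisms, and y₁, y₂ positive invertible elements of N. Then y₁ψ₁(x)y₁⁻¹ = y₂ψ₂(x)y₂⁻¹ for all x ∈ N if and only if ψ₁ = ψ₂ and y₂ = z y₁ for some positive invertible central element z ∈ Z(N). -/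
/-!
With u = y₁⁻¹y₂ the hypothesis reads u ψ₂(x) = ψ₁(x) u, and since ψ₁, ψ₂ preserve adjoints the
element c = u⋆u = y₂y₁⁻²y₂ commutes with all of N. In particular c commutes with y₂, which turns
into y₂² = c y₁². As y₁, y₂, c ≥ 0 and c commutes with y₁, uniqueness of positive square roots
gives y₂ = c^{1/2} y₁. So z = y₂y₁⁻¹ equals c^{1/2}: it is positive and central, and it lies in N
simply because it is y₂y₁⁻¹, although c^{1/2} is formed in B(H). Conjugation by z y₁ then agrees
with conjugation by y₁, which forces ψ₁ = ψ₂.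
-/

section Monoid

variable {M : Type*} [Monoid M]

theorem Units.conj_mul_eq_conj_of_commute {z : Mˣ} (y : Mˣ) (a : M)
    (hz : Commute (z : M) (y * a * ↑y⁻¹)) : ↑(z * y) * a * ↑(z * y)⁻¹ = y * a * ↑y⁻¹ := by
  calc ↑(z * y) * a * ↑(z * y)⁻¹ = z * (y * a * ↑y⁻¹) * ↑z⁻¹ := by
        simp only [mul_inv_rev, Units.val_mul, mul_assoc]
    _ = y * a * ↑y⁻¹ := by rw [hz.eq, Units.mul_inv_cancel_right]

theorem Units.inv_mul_mul_eq_mul_inv_mul_of_conj_eq {y₁ y₂ : Mˣ} {a b : M}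
    (h : ↑y₁ * b * ↑y₁⁻¹ = ↑y₂ * a * ↑y₂⁻¹) : ↑(y₁⁻¹ * y₂) * a = b * ↑(y₁⁻¹ * y₂) := by
  calc ↑(y₁⁻¹ * y₂) * a = ↑y₁⁻¹ * (↑y₂ * a * ↑y₂⁻¹) * ↑y₂ := by simp [mul_assoc]
    _ = ↑y₁⁻¹ * (↑y₁ * b * ↑y₁⁻¹) * ↑y₂ := by rw [h]
    _ = b * ↑(y₁⁻¹ * y₂) := by simp [mul_assoc]

theorem commute_star_mul_self_of_intertwines [StarMul M] {φ : M → M}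
    (hφ : ∀ a, φ (star a) = star (φ a)) {u : M} (hu : ∀ a, u * a = φ a * u) (a : M) :
    Commute (star u * u) a := by
  have hu' : a * star u = star u * φ a := by
    simpa only [star_mul, star_star, hφ] using congrArg star (hu (star a))
  calc star u * u * a = star u * φ a * u := by rw [mul_assoc, hu, mul_assoc]
    _ = a * (star u * u) := by rw [← hu', mul_assoc]

end Monoid

theorem star_mul_self_mul_mul_self_eq_of_commute {G : Type*} [Group G] [StarMul G] {p q : G}
    (hp : star p = p) (hq : star q = q) (h : Commute (star (p⁻¹ * q) * (p⁻¹ * q)) q) :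
    star (p⁻¹ * q) * (p⁻¹ * q) * (p * p) = q * q := by
  rw [star_mul, star_inv, hp, hq] at h ⊢
  have hqq : q * (p⁻¹ * p⁻¹ * q * q) = q * (q * (p⁻¹ * p⁻¹) * q) := by
    simpa only [mul_assoc] using h.eq
  have hcomm : p⁻¹ * p⁻¹ * q = q * (p⁻¹ * p⁻¹) := mul_right_cancel (mul_left_cancel hqq)
  calc q * p⁻¹ * (p⁻¹ * q) * (p * p) = q * (p⁻¹ * p⁻¹ * q) * (p * p) := by
        simp only [mul_assoc]
    _ = q * q := by rw [hcomm]; group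

section CStarAlgebra

variable {B : Type*} [CStarAlgebra B] [PartialOrder B] [StarOrderedRing B]

theorem CFC.eq_sqrt_mul_of_mul_self_eq {a b c : B} (ha : 0 ≤ a) (hb : 0 ≤ b) (hc : 0 ≤ c)
    (hca : Commute c a) (h : b * b = c * (a * a)) : b = sqrt c * a := by
  have hsa : Commute (sqrt c) a := hca.cfcₙ_nnreal NNReal.sqrt
  rw [← CFC.mul_self_eq_mul_self_iff b _ hb (hsa.mul_nonneg (sqrt_nonneg c) ha), h,
    hsa.symm.mul_mul_mul_comm, CFC.sqrt_mul_sqrt_self c hc]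

theorem StarSubalgebra.exists_central_nonneg_unit_of_mul_self_eq {A : StarSubalgebra ℂ B}
    {c : A} (hc : ∀ a, Commute c a) (hc₀ : 0 ≤ (c : B)) {y₁ y₂ : Aˣ}
    (h₁ : 0 ≤ ((y₁ : A) : B)) (h₂ : 0 ≤ ((y₂ : A) : B)) (h : (y₂ : A) * y₂ = c * (y₁ * y₁)) :
    ∃ z : Aˣ, 0 ≤ ((z : A) : B) ∧ (∀ a, (z : A) * a = a * z) ∧ y₂ = z * y₁ := by
  have hy : ((y₂ : A) : B) = CFC.sqrt (c : B) * (y₁ : A) :=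
    CFC.eq_sqrt_mul_of_mul_self_eq h₁ h₂ hc₀ (congrArg Subtype.val (hc y₁))
      (congrArg Subtype.val h)
  have hz : (((y₂ * y₁⁻¹ : Aˣ) : A) : B) = CFC.sqrt (c : B) := by
    calc (((y₂ * y₁⁻¹ : Aˣ) : A) : B) = ((y₂ : A) : B) * ((y₁⁻¹ : Aˣ) : A) := rfl
      _ = CFC.sqrt (c : B) * (((y₁ * y₁⁻¹ : Aˣ) : A) : B) := by rw [hy, mul_assoc]; rfl
      _ = CFC.sqrt (c : B) := by simp
  refine ⟨y₂ * y₁⁻¹, hz ▸ CFC.sqrt_nonneg _, fun a => Subtype.ext ?_, by group⟩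
  change (((y₂ * y₁⁻¹ : Aˣ) : A) : B) * a = a * (((y₂ * y₁⁻¹ : Aˣ) : A) : B)
  rw [hz]
  exact (Commute.cfcₙ_nnreal (congrArg Subtype.val (hc a).eq) NNReal.sqrt).eq

end CStarAlgebra

/-- Uniqueness of the decomposition: for *-automorphisms ψ₁, ψ₂ of N and positive
invertible y₁, y₂ ∈ N, one has y₁ψ₁(·)y₁⁻¹ = y₂ψ₂(·)y₂⁻¹ iff ψ₁ = ψ₂ and y₂ = z y₁
for a positive invertible central z. -/
theorem stmt9 {H : Type*} [NormedAddCommGroup H] [InnerProductSpace ℂ H] [CompleteSpace H]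
    (N : VonNeumannAlgebra H)
    (ψ₁ ψ₂ : ↥N.toStarSubalgebra ≃⋆ₐ[ℂ] ↥N.toStarSubalgebra)
    (y₁ y₂ : (↥N.toStarSubalgebra)ˣ)
    (h₁ : ContinuousLinearMap.IsPositive ((y₁ : ↥N.toStarSubalgebra) : H →L[ℂ] H))
    (h₂ : ContinuousLinearMap.IsPositive ((y₂ : ↥N.toStarSubalgebra) : H →L[ℂ] H)) :
    (∀ x : ↥N.toStarSubalgebra, ↑y₁ * ψ₁ x * ↑y₁⁻¹ = ↑y₂ * ψ₂ x * ↑y₂⁻¹) ↔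
      (ψ₁ = ψ₂ ∧ ∃ z : (↥N.toStarSubalgebra)ˣ,
        ContinuousLinearMap.IsPositive (((z : ↥N.toStarSubalgebra)) : H →L[ℂ] H) ∧
        (∀ a : ↥N.toStarSubalgebra, (z : ↥N.toStarSubalgebra) * a = a * (z : ↥N.toStarSubalgebra)) ∧
        (y₂ : ↥N.toStarSubalgebra) = (z : ↥N.toStarSubalgebra) * (y₁ : ↥N.toStarSubalgebra)) := by
  rw [← ContinuousLinearMap.nonneg_iff_isPositive] at h₁ h₂
  constructor
  · intro h
    have hself {y : (↥N.toStarSubalgebra)ˣ} (hy : 0 ≤ ((y : ↥N.toStarSubalgebra) : H →L[ℂ] H)) :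
        star y = y :=
      Units.ext (Subtype.ext hy.isSelfAdjoint.star_eq)
    have hc := commute_star_mul_self_of_intertwines (map_star (ψ₂.symm.trans ψ₁)) fun a =>
      Units.inv_mul_mul_eq_mul_inv_mul_of_conj_eq (by simpa using h (ψ₂.symm a))
    have hsq : star (y₁⁻¹ * y₂) * (y₁⁻¹ * y₂) * (y₁ * y₁) = y₂ * y₂ :=
      star_mul_self_mul_mul_self_eq_of_commute (hself h₁) (hself h₂) (Units.ext (hc y₂).eq)
    obtain ⟨z, hz₀, hz, rfl⟩ := StarSubalgebra.exists_central_nonneg_unit_of_mul_self_eq hc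
      (star_mul_self_nonneg _) h₁ h₂ (congrArg Units.val hsq).symm
    refine ⟨StarAlgEquiv.ext fun x => ?_, z,
      (ContinuousLinearMap.nonneg_iff_isPositive _).1 hz₀, hz, rfl⟩
    have hx := h x
    rw [Units.conj_mul_eq_conj_of_commute _ _ (hz _)] at hx
    simpa using hx
  · rintro ⟨rfl, z, -, hz, hy⟩ x
    rw [show y₂ = z * y₁ from Units.ext hy, Units.conj_mul_eq_conj_of_commute _ _ (hz _)]
end

section
/- Let M be a von Neumann algebra and let g_i, g_j be Murray–von Neumann equivalent projections in M via a partial isometry w (w*w = g_i, ww* = g_j) with g_i g_j = 0. Define g' = (g_i + w + w* + g_j)/2 + (1 − g_i − g_j). Then g' is a projection satisfying g_i ∧ g' = g_j ∧ g' = 0 and g_i ∨ g' = g_j ∨ g' = 1. -/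
/-!
Write `p = w⋆w` and `q = ww⋆`. The hypotheses make `p, w⋆, w, q` a system of `2 × 2` matrix
units, and `g'` acts as `½ [[1, 1], [1, 1]]` on `pH ⊕ qH` and as the identity on its complement.
The identity `p g' p = ½ p` rules out a common fixed vector of `p` and `g'`, and
`(1 - w) p + (1 - p + q) g' = 1` rules out a common null vector, which is what density of
`range p + range g'` amounts to.
-/

variable {H : Type*} [NormedAddCommGroup H] [InnerProductSpace ℂ H] [CompleteSpace H]

section Semigroup

variable {S : Type*}

theorem mul_mul_eq_zero_of_mul_self_eq_zero [SemigroupWithZero S] {a : S} (h : a * a = 0)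
    (x : S) : a * (a * x) = 0 := by
  rw [← mul_assoc, h, zero_mul]

theorem mul_mul_eq_self_of_mul_mul_eq_self [Semigroup S] {a b : S} (h : a * b * a = a) :
    a * (b * a) = a := by
  rw [← mul_assoc, h]

end Semigroup

section StarRing

variable {R : Type*} [Ring R] [StarRing R] {w : R}

theorem star_mul_star_eq_zero (hw2 : w * w = 0) : star w * star w = 0 := by
  rw [← star_mul, hw2, star_zero]

theorem star_mul_mul_star_eq_star (hw : w * star w * w = w) : star w * w * star w = star w := by
  simpa only [star_mul, star_star, mul_assoc] using congrArg star hw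

theorem mul_self_eq_zero_of_star_mul_self_mul_mul_star_self_eq_zero (hw : w * star w * w = w)
    (h : star w * w * (w * star w) = 0) : w * w = 0 :=
  calc w * w = (w * star w * w) * (w * star w * w) := by rw [hw]
    _ = w * (star w * w * (w * star w)) * w := by simp only [mul_assoc]
    _ = 0 := by rw [h, mul_zero, zero_mul]

variable [Algebra ℂ R]

/-- The projection `g'`; for a partial isometry `w` with `w ^ 2 = 0` acting on `H`, its range is
`{ξ + wξ | ξ ∈ range (w⋆w)} ⊕ range (1 - w⋆w - ww⋆)`. -/
noncomputable def tiltedProj (w : R) : R :=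
  (2⁻¹ : ℂ) • (star w * w + w + star w + w * star w) + (1 - star w * w - w * star w)

theorem tiltedProj_mem [StarModule ℂ R] (S : StarSubalgebra ℂ R) (hw : w ∈ S) :
    tiltedProj w ∈ S := by
  have hp : star w * w ∈ S := mul_mem (star_mem hw) hw
  have hq : w * star w ∈ S := mul_mem hw (star_mem hw)
  exact add_mem (S.smul_mem (add_mem (add_mem (add_mem hp hw) (star_mem hw)) hq) _)
    (sub_mem (sub_mem (one_mem S) hp) hq)

theorem tiltedProj_star (w : R) : tiltedProj (star w) = tiltedProj w := by
  simp only [tiltedProj, star_star]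
  module

theorem isSelfAdjoint_tiltedProj [StarModule ℂ R] (w : R) : IsSelfAdjoint (tiltedProj w) := by
  simp only [IsSelfAdjoint, tiltedProj, star_add, star_sub, star_smul, star_mul, star_star,
    star_one, star_inv₀, star_ofNat]
  module

theorem isIdempotentElem_tiltedProj (hw : w * star w * w = w) (hw2 : w * w = 0) :
    IsIdempotentElem (tiltedProj w) := by
  have hw' := star_mul_mul_star_eq_star hw
  have hw2' := star_mul_star_eq_zero hw2
  -- in right-associated form, these relations reduce every product of `w` and `w⋆`
  simp only [IsIdempotentElem, tiltedProj, mul_add, add_mul, mul_sub, sub_mul, smul_mul_assoc,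
    mul_smul_comm, mul_assoc, one_mul, mul_one, hw2, hw2', mul_mul_eq_zero_of_mul_self_eq_zero hw2,
    mul_mul_eq_zero_of_mul_self_eq_zero hw2', mul_mul_eq_self_of_mul_mul_eq_self hw,
    mul_mul_eq_self_of_mul_mul_eq_self hw']
  module

theorem star_mul_self_mul_tiltedProj_mul_star_mul_self (hw : w * star w * w = w)
    (hw2 : w * w = 0) :
    star w * w * tiltedProj w * (star w * w) = (2⁻¹ : ℂ) • (star w * w) := by
  have hw' := star_mul_mul_star_eq_star hw
  have hw2' := star_mul_star_eq_zero hw2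
  simp only [tiltedProj, mul_add, add_mul, mul_sub, sub_mul, smul_mul_assoc,
    mul_smul_comm, mul_assoc, mul_one, hw2, mul_mul_eq_zero_of_mul_self_eq_zero hw2,
    mul_mul_eq_zero_of_mul_self_eq_zero hw2', mul_mul_eq_self_of_mul_mul_eq_self hw,
    mul_mul_eq_self_of_mul_mul_eq_self hw']
  module

theorem one_sub_mul_star_mul_self_add_mul_tiltedProj (hw : w * star w * w = w)
    (hw2 : w * w = 0) :
    (1 - w) * (star w * w) + (1 - star w * w + w * star w) * tiltedProj w = 1 := by
  have hw' := star_mul_mul_star_eq_star hw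
  have hw2' := star_mul_star_eq_zero hw2
  simp only [tiltedProj, mul_add, add_mul, mul_sub, sub_mul, mul_smul_comm, mul_assoc, one_mul,
    mul_one, hw2, hw2', mul_mul_eq_zero_of_mul_self_eq_zero hw2,
    mul_mul_eq_zero_of_mul_self_eq_zero hw2', mul_mul_eq_self_of_mul_mul_eq_self hw,
    mul_mul_eq_self_of_mul_mul_eq_self hw']
  module

end StarRing

namespace ContinuousLinearMap

theorem eq_zero_of_mul_mul_self_eq_smul {𝕜 E : Type*} [NontriviallyNormedField 𝕜]
    [NormedAddCommGroup E] [NormedSpace 𝕜 E] {p q : E →L[𝕜] E} {c : 𝕜}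
    (h : p * q * p = c • p) (hc : c ≠ 1) {x : E} (hpx : p x = x) (hqx : q x = x) : x = 0 := by
  have hx : x = c • x :=
    calc x = (p * q * p) x := by rw [mul_apply_eq_comp, mul_apply_eq_comp, hpx, hqx, hpx]
      _ = c • x := by rw [h, smul_apply, hpx]
  have : (1 - c) • x = 0 := by rw [sub_smul, one_smul, ← hx, sub_self]
  exact (smul_eq_zero.mp this).resolve_left (sub_ne_zero.mpr hc.symm)

theorem topologicalClosure_range_sup_range_eq_top {𝕜 E : Type*} [RCLike 𝕜]
    [NormedAddCommGroup E] [InnerProductSpace 𝕜 E] [CompleteSpace E] {p q a b : E →L[𝕜] E}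
    (hp : IsSelfAdjoint p) (hq : IsSelfAdjoint q) (h : a * p + b * q = 1) :
    (LinearMap.range (p : E →ₗ[𝕜] E) ⊔
      LinearMap.range (q : E →ₗ[𝕜] E)).topologicalClosure = ⊤ := by
  rw [Submodule.topologicalClosure_eq_top_iff, ← Submodule.inf_orthogonal,
    hp.isSymmetric.orthogonal_range, hq.isSymmetric.orthogonal_range, Submodule.eq_bot_iff]
  rintro x ⟨hpx : p x = 0, hqx : q x = 0⟩
  calc x = (a * p + b * q) x := by rw [h, one_apply_eq_self]
    _ = 0 := by rw [add_apply, mul_apply_eq_comp, mul_apply_eq_comp, hpx, hqx, map_zero, map_zero,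
      add_zero]

end ContinuousLinearMap

section HilbertSpace

variable {w : H →L[ℂ] H}

theorem eq_zero_of_star_mul_self_apply_eq_of_tiltedProj_apply_eq (hw : w * star w * w = w)
    (hw2 : w * w = 0) {x : H} (hpx : (star w * w) x = x) (hx : tiltedProj w x = x) : x = 0 :=
  ContinuousLinearMap.eq_zero_of_mul_mul_self_eq_smul
    (star_mul_self_mul_tiltedProj_mul_star_mul_self hw hw2) (by norm_num) hpx hx

theorem topologicalClosure_range_star_mul_self_sup_range_tiltedProj (hw : w * star w * w = w)
    (hw2 : w * w = 0) :
    (LinearMap.range ((star w * w : H →L[ℂ] H) : H →ₗ[ℂ] H) ⊔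
      LinearMap.range ((tiltedProj w : H →L[ℂ] H) : H →ₗ[ℂ] H)).topologicalClosure =
      ⊤ :=
  ContinuousLinearMap.topologicalClosure_range_sup_range_eq_top (IsSelfAdjoint.star_mul_self w)
    (isSelfAdjoint_tiltedProj w) (one_sub_mul_star_mul_self_add_mul_tiltedProj hw hw2)

end HilbertSpace

theorem stmt11_general (M : VonNeumannAlgebra H) (gi gj w : H →L[ℂ] H)
    (hw : w ∈ M) (hwpi : w * star w * w = w)
    (hwi : star w * w = gi) (hwj : w * star w = gj)
    (horth : gi * gj = 0) :
    M.carrier ((2⁻¹ : ℂ) • (gi + w + star w + gj) + (1 - gi - gj)) ∧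
    IsProjIn M ((2⁻¹ : ℂ) • (gi + w + star w + gj) + (1 - gi - gj)) ∧
    -- gᵢ ∧ g' = 0 and gⱼ ∧ g' = 0 (trivial intersection of ranges):
    (∀ x : H, gi x = x →
      ((2⁻¹ : ℂ) • (gi + w + star w + gj) + (1 - gi - gj)) x = x → x = 0) ∧
    (∀ x : H, gj x = x →
      ((2⁻¹ : ℂ) • (gi + w + star w + gj) + (1 - gi - gj)) x = x → x = 0) ∧
    -- gᵢ ∨ g' = 1 and gⱼ ∨ g' = 1 (the sum of the ranges is dense):
    (LinearMap.range (gi : H →ₗ[ℂ] H) ⊔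
      LinearMap.range (((2⁻¹ : ℂ) • (gi + w + star w + gj) + (1 - gi - gj) : H →L[ℂ] H) : H →ₗ[ℂ] H)).topologicalClosure = ⊤ ∧
    (LinearMap.range (gj : H →ₗ[ℂ] H) ⊔
      LinearMap.range (((2⁻¹ : ℂ) • (gi + w + star w + gj) + (1 - gi - gj) : H →L[ℂ] H) : H →ₗ[ℂ] H)).topologicalClosure = ⊤ := by
  subst hwi hwj
  have hw2 := mul_self_eq_zero_of_star_mul_self_mul_mul_star_self_eq_zero hwpi horth
  have hmem : tiltedProj w ∈ M := tiltedProj_mem M.toStarSubalgebra hw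
  -- `w ↦ w⋆` swaps `w⋆w` and `ww⋆` and fixes `tiltedProj w`
  have hw' : star w * star (star w) * star w = star w := by
    rw [star_star]; exact star_mul_mul_star_eq_star hwpi
  have hw2' := star_mul_star_eq_zero hw2
  refine ⟨hmem, ⟨hmem, isSelfAdjoint_tiltedProj w, isIdempotentElem_tiltedProj hwpi hw2⟩,
    fun _ => eq_zero_of_star_mul_self_apply_eq_of_tiltedProj_apply_eq hwpi hw2, fun x => ?_,
    topologicalClosure_range_star_mul_self_sup_range_tiltedProj hwpi hw2, ?_⟩
  · have h := eq_zero_of_star_mul_self_apply_eq_of_tiltedProj_apply_eq (x := x) hw' hw2'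
    rw [star_star, tiltedProj_star] at h
    exact h
  · have h := topologicalClosure_range_star_mul_self_sup_range_tiltedProj hw' hw2'
    rw [star_star, tiltedProj_star] at h
    exact h

/-- If w implements an equivalence between orthogonal projections gᵢ, gⱼ of M, then
g' = (gᵢ + w + w* + gⱼ)/2 + (1 - gᵢ - gⱼ) is a projection with gᵢ ∧ g' = gⱼ ∧ g' = 0
and gᵢ ∨ g' = gⱼ ∨ g' = 1. -/
theorem stmt11 (M : VonNeumannAlgebra H) (gi gj w : H →L[ℂ] H)
    (hgi : IsProjIn M gi) (hgj : IsProjIn M gj)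
    (hw : w ∈ M) (hwpi : w * star w * w = w)
    (hwi : star w * w = gi) (hwj : w * star w = gj)
    (horth : gi * gj = 0) :
    M.carrier ((2⁻¹ : ℂ) • (gi + w + star w + gj) + (1 - gi - gj)) ∧
    IsProjIn M ((2⁻¹ : ℂ) • (gi + w + star w + gj) + (1 - gi - gj)) ∧
    -- gᵢ ∧ g' = 0 and gⱼ ∧ g' = 0 (trivial intersection of ranges):
    (∀ x : H, gi x = x →
      ((2⁻¹ : ℂ) • (gi + w + star w + gj) + (1 - gi - gj)) x = x → x = 0) ∧
    (∀ x : H, gj x = x →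
      ((2⁻¹ : ℂ) • (gi + w + star w + gj) + (1 - gi - gj)) x = x → x = 0) ∧
    -- gᵢ ∨ g' = 1 and gⱼ ∨ g' = 1 (the sum of the ranges is dense):
    (LinearMap.range (gi : H →ₗ[ℂ] H) ⊔
      LinearMap.range (((2⁻¹ : ℂ) • (gi + w + star w + gj) + (1 - gi - gj) : H →L[ℂ] H) : H →ₗ[ℂ] H)).topologicalClosure = ⊤ ∧
    (LinearMap.range (gj : H →ₗ[ℂ] H) ⊔
      LinearMap.range (((2⁻¹ : ℂ) • (gi + w + star w + gj) + (1 - gi - gj) : H →L[ℂ] H) : H →ₗ[ℂ] H)).topologicalClosure = ⊤ :=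
  stmt11_general M gi gj w hw hwpi hwi hwj horth
end
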